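/- Let r ∈ ℝ with r ≠ 0. There is a 5-dimensional real Lie algebra 𝔤 with basis e₁,...,e₅ and dual basis e¹,...,e⁵ whose Chevalley–Eilenberg differentials satisfy (writing e^{ij} for eⁱ∧eʲ): de¹ = 0, de² = r e^{34} + (r²/2) e^{35}, de³ = r e^{13}, de⁴ = −(r²/2) e^{15} + r e^{23}, de⁵ = −2e^{14} − 2e^{23} (i.e., the bracket determined by these equations satisfies the Jacobi identity). Moreover, 𝔤 is solvable, the quadruplet η = e⁵, ω₁ = e^{12} + e^{34}, ω₂ = e^{13} − e^{24}, ω₃ = e^{14} + e^{23} is a hypo-contact structure on 𝔤, and 𝔤 is isomorphic to 𝔥₅. -/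

import Mathlib

noncomputable section

/-- Chevalley–Eilenberg differential of a 1-form on a Lie algebra. -/
def dOne {V : Type*} [LieRing V] [LieAlgebra ℝ V] (α : V → ℝ) (x y : V) : ℝ :=
  -α ⁅x, y⁆

/-- Chevalley–Eilenberg differential of a 2-form on a Lie algebra. -/
def dTwo {V : Type*} [LieRing V] [LieAlgebra ℝ V] (ω : V → V → ℝ) (x y z : V) : ℝ :=
  -ω ⁅x, y⁆ z + ω ⁅x, z⁆ y - ω ⁅y, z⁆ x

/-- Chevalley–Eilenberg differential of a 3-form on a Lie algebra. -/
def dThree {V : Type*} [LieRing V] [LieAlgebra ℝ V] (σ : V → V → V → ℝ)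
    (x y z w : V) : ℝ :=
  -σ ⁅x, y⁆ z w + σ ⁅x, z⁆ y w - σ ⁅x, w⁆ y z
    - σ ⁅y, z⁆ x w + σ ⁅y, w⁆ x z - σ ⁅z, w⁆ x y

/-- Wedge product of two 1-forms, as an alternating bilinear map. -/
def wedge1 {V : Type*} [LieRing V] [LieAlgebra ℝ V] (α β : V →ₗ[ℝ] ℝ) :
    V →ₗ[ℝ] V →ₗ[ℝ] ℝ :=
  LinearMap.mk₂ ℝ (fun x y => α x * β y - α y * β x)
    (fun m₁ m₂ n => by simp [map_add]; ring)
    (fun c m n => by simp [map_smul, smul_eq_mul]; ring)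
    (fun m n₁ n₂ => by simp [map_add]; ring)
    (fun c m n => by simp [map_smul, smul_eq_mul]; ring)

/-- Wedge product of a 1-form and a 2-form. -/
def wedge12 {V : Type*} (α : V → ℝ) (ω : V → V → ℝ) (x y z : V) : ℝ :=
  α x * ω y z - α y * ω x z + α z * ω x y

/-- Wedge product of two 2-forms. -/
def wedge22 {V : Type*} (ω τ : V → V → ℝ) (x y z w : V) : ℝ :=
  ω x y * τ z w - ω x z * τ y w + ω x w * τ y z
    + ω y z * τ x w - ω y w * τ x z + ω z w * τ x y

/-- Wedge product of a 4-form and a 1-form. -/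
def wedge41 {V : Type*} (v : V → V → V → V → ℝ) (α : V → ℝ)
    (x₀ x₁ x₂ x₃ x₄ : V) : ℝ :=
  α x₀ * v x₁ x₂ x₃ x₄ - α x₁ * v x₀ x₂ x₃ x₄ + α x₂ * v x₀ x₁ x₃ x₄
    - α x₃ * v x₀ x₁ x₂ x₄ + α x₄ * v x₀ x₁ x₂ x₃

/-- An SU(2)-structure on a 5-dimensional real Lie algebra. -/
structure IsSU2Structure {V : Type*} [LieRing V] [LieAlgebra ℝ V]
    (η : V →ₗ[ℝ] ℝ) (ω₁ ω₂ ω₃ : V →ₗ[ℝ] V →ₗ[ℝ] ℝ) : Prop where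
  alt1 : ∀ x, ω₁ x x = 0
  alt2 : ∀ x, ω₂ x x = 0
  alt3 : ∀ x, ω₃ x x = 0
  vol : ∃ v : V → V → V → V → ℝ,
    wedge22 (fun a b => ω₁ a b) (fun a b => ω₁ a b) = v ∧
    wedge22 (fun a b => ω₂ a b) (fun a b => ω₂ a b) = v ∧
    wedge22 (fun a b => ω₃ a b) (fun a b => ω₃ a b) = v ∧
    wedge22 (fun a b => ω₁ a b) (fun a b => ω₂ a b) = (fun _ _ _ _ => 0) ∧
    wedge22 (fun a b => ω₁ a b) (fun a b => ω₃ a b) = (fun _ _ _ _ => 0) ∧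
    wedge22 (fun a b => ω₂ a b) (fun a b => ω₃ a b) = (fun _ _ _ _ => 0) ∧
    wedge41 v (fun x => η x) ≠ (fun _ _ _ _ _ => 0)
  compat : ∀ X Y : V, (∀ z, ω₃ X z = ω₁ Y z) → 0 ≤ ω₂ X Y

/-- A hypo-contact structure on a 5-dimensional real Lie algebra. -/
structure IsHypoContact {V : Type*} [LieRing V] [LieAlgebra ℝ V]
    (η : V →ₗ[ℝ] ℝ) (ω₁ ω₂ ω₃ : V →ₗ[ℝ] V →ₗ[ℝ] ℝ)
    extends IsSU2Structure η ω₁ ω₂ ω₃ : Prop where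
  contact : ∀ x y, dOne (fun z => η z) x y = -2 * ω₃ x y
  closed1 : ∀ x y z w, dThree (wedge12 (fun z => η z) (fun a b => ω₁ a b)) x y z w = 0
  closed2 : ∀ x y z w, dThree (wedge12 (fun z => η z) (fun a b => ω₂ a b)) x y z w = 0

/-- The Lie algebra `𝔥₁`. -/
def IsH1 (V : Type*) [LieRing V] [LieAlgebra ℝ V] : Prop :=
  ∃ X : Module.Basis (Fin 5) ℝ V,
    ⁅X 0, X 1⁆ = 0 ∧ ⁅X 0, X 2⁆ = 0 ∧ ⁅X 0, X 3⁆ = X 4 ∧ ⁅X 0, X 4⁆ = 0 ∧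
    ⁅X 1, X 2⁆ = X 4 ∧ ⁅X 1, X 3⁆ = 0 ∧ ⁅X 1, X 4⁆ = 0 ∧
    ⁅X 2, X 3⁆ = 0 ∧ ⁅X 2, X 4⁆ = 0 ∧ ⁅X 3, X 4⁆ = 0

/-- The Lie algebra `𝔥₂`. -/
def IsH2 (V : Type*) [LieRing V] [LieAlgebra ℝ V] : Prop :=
  ∃ X : Module.Basis (Fin 5) ℝ V,
    ⁅X 0, X 1⁆ = 0 ∧ ⁅X 0, X 2⁆ = 0 ∧ ⁅X 0, X 3⁆ = 0 ∧ ⁅X 0, X 4⁆ = (2 : ℝ) • X 0 ∧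
    ⁅X 1, X 2⁆ = X 0 ∧ ⁅X 1, X 3⁆ = 0 ∧ ⁅X 1, X 4⁆ = X 1 ∧
    ⁅X 2, X 3⁆ = 0 ∧ ⁅X 2, X 4⁆ = X 2 ∧ ⁅X 3, X 4⁆ = (-3 : ℝ) • X 3

/-- The Lie algebra `𝔥₃`. -/
def IsH3 (V : Type*) [LieRing V] [LieAlgebra ℝ V] : Prop :=
  ∃ X : Module.Basis (Fin 5) ℝ V,
    ⁅X 0, X 1⁆ = 0 ∧ ⁅X 0, X 2⁆ = 0 ∧ ⁅X 0, X 3⁆ = (2 : ℝ) • X 0 ∧ ⁅X 0, X 4⁆ = 0 ∧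
    ⁅X 1, X 2⁆ = X 0 ∧ ⁅X 1, X 3⁆ = X 1 ∧ ⁅X 1, X 4⁆ = -X 2 ∧
    ⁅X 2, X 3⁆ = X 2 ∧ ⁅X 2, X 4⁆ = X 1 ∧ ⁅X 3, X 4⁆ = 0

/-- The Lie algebra `𝔥₄`. -/
def IsH4 (V : Type*) [LieRing V] [LieAlgebra ℝ V] : Prop :=
  ∃ X : Module.Basis (Fin 5) ℝ V,
    ⁅X 0, X 1⁆ = 0 ∧ ⁅X 0, X 2⁆ = 0 ∧ ⁅X 0, X 3⁆ = X 0 ∧ ⁅X 0, X 4⁆ = 0 ∧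
    ⁅X 1, X 2⁆ = 0 ∧ ⁅X 1, X 3⁆ = 0 ∧ ⁅X 1, X 4⁆ = X 1 ∧
    ⁅X 2, X 3⁆ = -X 2 ∧ ⁅X 2, X 4⁆ = -X 2 ∧ ⁅X 3, X 4⁆ = 0

/-- The Lie algebra `𝔥₅`. -/
def IsH5 (V : Type*) [LieRing V] [LieAlgebra ℝ V] : Prop :=
  ∃ X : Module.Basis (Fin 5) ℝ V,
    ⁅X 0, X 1⁆ = 0 ∧ ⁅X 0, X 2⁆ = 0 ∧ ⁅X 0, X 3⁆ = 0 ∧ ⁅X 0, X 4⁆ = X 0 ∧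
    ⁅X 1, X 2⁆ = 0 ∧ ⁅X 1, X 3⁆ = X 0 ∧ ⁅X 1, X 4⁆ = 0 ∧
    ⁅X 2, X 3⁆ = X 1 ∧ ⁅X 2, X 4⁆ = -X 2 ∧ ⁅X 3, X 4⁆ = X 3

/-- `e^{ij}`, the wedge of the `i`-th and `j`-th dual basis 1-forms. -/
def bw {V : Type*} [LieRing V] [LieAlgebra ℝ V] (e : Module.Basis (Fin 5) ℝ V) (i j : Fin 5) :
    V →ₗ[ℝ] V →ₗ[ℝ] ℝ :=
  wedge1 (e.coord i) (e.coord j)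

/-- The content of Statement 7: structure equations, solvability, hypo-contact structure
and the isomorphism type, for a Lie algebra `V`. -/
def GoodLieAlgebra7 (r : ℝ) (V : Type) [LieRing V] [LieAlgebra ℝ V] : Prop :=
  LieAlgebra.IsSolvable V ∧
  ∃ e : Module.Basis (Fin 5) ℝ V,
      (∀ x y : _, dOne (⇑(e.coord 0)) x y = 0) ∧
      (∀ x y : _, dOne (⇑(e.coord 1)) x y = (r) * bw e 2 3 x y + (r^2/2) * bw e 2 4 x y) ∧
      (∀ x y : _, dOne (⇑(e.coord 2)) x y = (r) * bw e 0 2 x y) ∧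
      (∀ x y : _, dOne (⇑(e.coord 3)) x y = (-(r^2/2)) * bw e 0 4 x y + (r) * bw e 1 2 x y) ∧
      (∀ x y : _, dOne (⇑(e.coord 4)) x y = (-2) * bw e 0 3 x y + (-2) * bw e 1 2 x y) ∧
      IsHypoContact (e.coord 4) (bw e 0 1 + bw e 2 3) (bw e 0 2 - bw e 1 3) (bw e 0 3 + bw e 1 2) ∧
      IsH5 V


/-!
The algebraic conditions on `(η, ω₁, ω₂, ω₃)` hold for the standard quadruplet of any basis:
`ωᵢ ∧ ωⱼ = 2δᵢⱼ e¹²³⁴`, and `i_X ω₃ = i_Y ω₁` forces `Y = (-x³, x⁴, x¹, -x², ·)`, so that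
`ω₂(X, Y) = ∑_{i ≤ 4} (xⁱ)²`. The derived series lies in `ker e¹`, then in `ker e¹ ∩ ker e³`,
then vanishes. Finally `X₁ = -2r²e₄ + 4re₅`, `X₂ = 2re₂`, `X₃ = e₄ + (2/r)e₅`, `X₄ = e₃`,
`X₅ = e₁/r` is a basis with the brackets of `𝔥₅`. (Indices start at 1 here and at 0 in the code.)
-/

theorem LieAlgebra.derivedSeries_succ_le_of_lie_mem {R L : Type*} [CommRing R] [LieRing L]
    [LieAlgebra R L] {k : ℕ} {S T : Submodule R L} (hk : ∀ x ∈ derivedSeries R L k, x ∈ S)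
    (hST : ∀ x ∈ S, ∀ y ∈ S, ⁅x, y⁆ ∈ T) : ∀ x ∈ derivedSeries R L (k + 1), x ∈ T := by
  have h : LieSubmodule.toSubmodule ⁅derivedSeries R L k, derivedSeries R L k⁆ ≤ T := by
    rw [LieSubmodule.lieIdeal_oper_eq_linear_span, Submodule.span_le]
    rintro _ ⟨⟨x, hx⟩, ⟨y, hy⟩, rfl⟩
    exact hST x (hk x hx) y (hk y hy)
  intro x hx
  rw [derivedSeries_def, derivedSeriesOfIdeal_succ] at hx
  exact h hx

section StandardSU2

variable {V : Type*} [LieRing V] [LieAlgebra ℝ V] (e : Module.Basis (Fin 5) ℝ V)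

theorem bw_apply (i j : Fin 5) (x y : V) :
    bw e i j x y = e.coord i x * e.coord j y - e.coord i y * e.coord j x := by
  simp only [bw, wedge1, LinearMap.mk₂_apply]

theorem isSU2Structure_basis :
    IsSU2Structure (e.coord 4) (bw e 0 1 + bw e 2 3) (bw e 0 2 - bw e 1 3)
      (bw e 0 3 + bw e 1 2) := by
  refine ⟨fun x => ?_, fun x => ?_, fun x => ?_, ⟨_, rfl, ?_, ?_, ?_, ?_, ?_, ?_⟩, ?_⟩
  iterate 3 (simp only [LinearMap.add_apply, LinearMap.sub_apply, bw_apply]; ring)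
  iterate 5
    funext x y z w
    simp only [wedge22, LinearMap.add_apply, LinearMap.sub_apply, bw_apply]
    ring
  · intro hvol
    have := congrFun (congrFun (congrFun (congrFun (congrFun hvol (e 0)) (e 1)) (e 2)) (e 3)) (e 4)
    simp [wedge41, wedge22, bw_apply] at this
  · intro X Y h
    set x := e.repr X
    set y := e.repr Y
    have h0 : x 3 = y 1 := by simpa [bw_apply] using h (e 0)
    have h1 : -x 2 = y 0 := by simpa [bw_apply] using h (e 1)
    have h2 : x 1 = -y 3 := by simpa [bw_apply] using h (e 2)
    have h3 : x 0 = y 2 := by simpa [bw_apply] using h (e 3)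
    have hω₂ : (bw e 0 2 - bw e 1 3) X Y = x 0 ^ 2 + x 1 ^ 2 + x 2 ^ 2 + x 3 ^ 2 := by
      simp only [LinearMap.sub_apply, bw_apply, Module.Basis.coord_apply]
      linear_combination (-x 0) * h3 + x 2 * h1 - x 1 * h2 - x 3 * h0
    rw [hω₂]
    positivity

end StandardSU2

/-- `ℝ⁵`, tagged by `r` so that it can carry the `r`-dependent bracket below. -/
def HypoContactAlg (_r : ℝ) : Type := Fin 5 → ℝ

namespace HypoContactAlg

variable {r : ℝ}

instance : AddCommGroup (HypoContactAlg r) := inferInstanceAs (AddCommGroup (Fin 5 → ℝ))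

instance : Module ℝ (HypoContactAlg r) := inferInstanceAs (Module ℝ (Fin 5 → ℝ))

def coord (x : HypoContactAlg r) : Fin 5 → ℝ := x

def mk (f : Fin 5 → ℝ) : HypoContactAlg r := f

@[ext]
theorem ext {x y : HypoContactAlg r} (h : ∀ i, x.coord i = y.coord i) : x = y := funext h

@[simp] theorem coord_add (x y : HypoContactAlg r) (i : Fin 5) :
    (x + y).coord i = x.coord i + y.coord i := rfl

@[simp] theorem coord_smul (t : ℝ) (x : HypoContactAlg r) (i : Fin 5) :
    (t • x).coord i = t * x.coord i := rfl

@[simp] theorem coord_neg (x : HypoContactAlg r) (i : Fin 5) : (-x).coord i = -x.coord i := rfl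

@[simp] theorem coord_zero (i : Fin 5) : (0 : HypoContactAlg r).coord i = 0 := rfl

@[simp] theorem coord_mk (f : Fin 5 → ℝ) (i : Fin 5) : (mk f : HypoContactAlg r).coord i = f i :=
  rfl

/-- Read off from the structure equations: the `k`-th coordinate of `⁅x, y⁆` is `-de^k(x, y)`. -/
def bracket (x y : HypoContactAlg r) : HypoContactAlg r :=
  mk ![0,
    -(r * (x.coord 2 * y.coord 3 - x.coord 3 * y.coord 2)
      + r ^ 2 / 2 * (x.coord 2 * y.coord 4 - x.coord 4 * y.coord 2)),
    -(r * (x.coord 0 * y.coord 2 - x.coord 2 * y.coord 0)),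
    r ^ 2 / 2 * (x.coord 0 * y.coord 4 - x.coord 4 * y.coord 0)
      - r * (x.coord 1 * y.coord 2 - x.coord 2 * y.coord 1),
    2 * (x.coord 0 * y.coord 3 - x.coord 3 * y.coord 0)
      + 2 * (x.coord 1 * y.coord 2 - x.coord 2 * y.coord 1)]

instance : LieRing (HypoContactAlg r) where
  bracket := bracket
  add_lie x y z := by ext i; fin_cases i <;> simp [bracket] <;> ring
  lie_add x y z := by ext i; fin_cases i <;> simp [bracket] <;> ring
  lie_self x := by ext i; fin_cases i <;> simp [bracket, mul_comm]
  leibniz_lie x y z := by ext i; fin_cases i <;> simp [bracket] <;> ring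

@[simp] theorem coord_lie (x y : HypoContactAlg r) (i : Fin 5) :
    ⁅x, y⁆.coord i = (bracket x y).coord i := rfl

instance : LieAlgebra ℝ (HypoContactAlg r) where
  lie_smul t x y := by ext i; fin_cases i <;> simp [bracket] <;> ring

def stdBasis : Module.Basis (Fin 5) ℝ (HypoContactAlg r) :=
  (Pi.basisFun ℝ (Fin 5)).map
    (LinearEquiv.refl ℝ (Fin 5 → ℝ) : (Fin 5 → ℝ) ≃ₗ[ℝ] HypoContactAlg r)

@[simp] theorem stdBasis_repr (x : HypoContactAlg r) (i : Fin 5) :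
    stdBasis.repr x i = x.coord i :=
  rfl

@[simp] theorem coord_stdBasis (i j : Fin 5) :
    (stdBasis i : HypoContactAlg r).coord j = if i = j then 1 else 0 := by
  rw [← stdBasis_repr, Module.Basis.repr_self, Finsupp.single_apply]

theorem isSolvable : LieAlgebra.IsSolvable (HypoContactAlg r) := by
  let S₁ : Submodule ℝ (HypoContactAlg r) := LinearMap.ker (stdBasis.coord 0)
  let S₂ : Submodule ℝ (HypoContactAlg r) := S₁ ⊓ LinearMap.ker (stdBasis.coord 2)
  have h₁ : ∀ x ∈ LieAlgebra.derivedSeries ℝ (HypoContactAlg r) 1, x ∈ S₁ :=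
    LieAlgebra.derivedSeries_succ_le_of_lie_mem (S := ⊤) (fun _ _ => Submodule.mem_top)
      fun x _ y _ => by simp [S₁, bracket]
  have h₂ : ∀ x ∈ LieAlgebra.derivedSeries ℝ (HypoContactAlg r) 2, x ∈ S₂ :=
    LieAlgebra.derivedSeries_succ_le_of_lie_mem h₁ fun x hx y hy => by
      simp_all [S₁, S₂, bracket]
  have h₃ : ∀ x ∈ LieAlgebra.derivedSeries ℝ (HypoContactAlg r) 3, x ∈ (⊥ : Submodule ℝ _) :=
    LieAlgebra.derivedSeries_succ_le_of_lie_mem h₂ fun x hx y hy => by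
      simp only [S₁, S₂, Submodule.mem_inf, LinearMap.mem_ker, Module.Basis.coord_apply,
        stdBasis_repr] at hx hy
      rw [Submodule.mem_bot]
      ext i
      fin_cases i <;> simp [bracket, hx, hy]
  exact LieAlgebra.IsSolvable.mk ((LieSubmodule.eq_bot_iff _).2 h₃)

theorem dOne_coord_zero (x y : HypoContactAlg r) : dOne (stdBasis.coord 0) x y = 0 := by
  simp [dOne, bracket]

theorem dOne_coord_one (x y : HypoContactAlg r) :
    dOne (stdBasis.coord 1) x y = r * bw stdBasis 2 3 x y + r ^ 2 / 2 * bw stdBasis 2 4 x y := by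
  simp only [dOne, bw_apply, Module.Basis.coord_apply, stdBasis_repr, coord_lie, bracket, coord_mk,
    Matrix.cons_val]
  ring

theorem dOne_coord_two (x y : HypoContactAlg r) :
    dOne (stdBasis.coord 2) x y = r * bw stdBasis 0 2 x y := by
  simp only [dOne, bw_apply, Module.Basis.coord_apply, stdBasis_repr, coord_lie, bracket, coord_mk,
    Matrix.cons_val]
  ring

theorem dOne_coord_three (x y : HypoContactAlg r) :
    dOne (stdBasis.coord 3) x y =
      -(r ^ 2 / 2) * bw stdBasis 0 4 x y + r * bw stdBasis 1 2 x y := by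
  simp only [dOne, bw_apply, Module.Basis.coord_apply, stdBasis_repr, coord_lie, bracket, coord_mk,
    Matrix.cons_val]
  ring

theorem dOne_coord_four (x y : HypoContactAlg r) :
    dOne (stdBasis.coord 4) x y = -2 * bw stdBasis 0 3 x y + -2 * bw stdBasis 1 2 x y := by
  simp only [dOne, bw_apply, Module.Basis.coord_apply, stdBasis_repr, coord_lie, bracket, coord_mk,
    Matrix.cons_val]
  ring

theorem isHypoContact :
    IsHypoContact ((stdBasis (r := r)).coord 4) (bw stdBasis 0 1 + bw stdBasis 2 3)
      (bw stdBasis 0 2 - bw stdBasis 1 3) (bw stdBasis 0 3 + bw stdBasis 1 2) where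
  toIsSU2Structure := isSU2Structure_basis stdBasis
  contact x y := by rw [dOne_coord_four, LinearMap.add_apply, LinearMap.add_apply]; ring
  closed1 x y z w := by
    simp only [dThree, wedge12, LinearMap.add_apply, bw_apply, Module.Basis.coord_apply,
      stdBasis_repr, coord_lie, bracket, coord_mk, Matrix.cons_val]
    ring
  closed2 x y z w := by
    simp only [dThree, wedge12, LinearMap.sub_apply, bw_apply, Module.Basis.coord_apply,
      stdBasis_repr, coord_lie, bracket, coord_mk, Matrix.cons_val]
    ring

/-- `eᵢ ↦ Xᵢ`, the change to the `𝔥₅` basis. -/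
def h5Equiv (hr : r ≠ 0) : HypoContactAlg r ≃ₗ[ℝ] HypoContactAlg r where
  toFun x := mk ![x.coord 4 / r, 2 * r * x.coord 1, x.coord 3,
    -2 * r ^ 2 * x.coord 0 + x.coord 2, 4 * r * x.coord 0 + 2 / r * x.coord 2]
  invFun y := mk ![y.coord 4 / (8 * r) - y.coord 3 / (4 * r ^ 2), y.coord 1 / (2 * r),
    y.coord 3 / 2 + r * y.coord 4 / 4, y.coord 2, r * y.coord 0]
  map_add' x y := by ext i; fin_cases i <;> simp <;> ring
  map_smul' t x := by ext i; fin_cases i <;> simp <;> ring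
  left_inv x := by ext i; fin_cases i <;> simp <;> field_simp <;> ring
  right_inv y := by ext i; fin_cases i <;> simp <;> field_simp <;> ring

theorem isH5 (hr : r ≠ 0) : IsH5 (HypoContactAlg r) := by
  refine ⟨stdBasis.map (h5Equiv hr), ?_⟩
  simp only [Module.Basis.map_apply]
  refine ⟨?_, ?_, ?_, ?_, ?_, ?_, ?_, ?_, ?_, ?_⟩ <;>
    · ext i
      fin_cases i <;> simp [h5Equiv, bracket] <;> field_simp <;> ring

end HypoContactAlg

theorem exists_good_lie_algebra7 (r : ℝ) (hr : r ≠ 0) :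
    ∃ (V : Type) (i₁ : LieRing V) (i₂ : @LieAlgebra ℝ V _ i₁),
      @GoodLieAlgebra7 r V i₁ i₂ :=
  ⟨HypoContactAlg r, inferInstance, inferInstance, HypoContactAlg.isSolvable,
    HypoContactAlg.stdBasis, HypoContactAlg.dOne_coord_zero, HypoContactAlg.dOne_coord_one,
    HypoContactAlg.dOne_coord_two, HypoContactAlg.dOne_coord_three,
    HypoContactAlg.dOne_coord_four, HypoContactAlg.isHypoContact, HypoContactAlg.isH5 hr⟩

end
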